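/- For all positive integers m and real a > m, the sum over k from 1 to m of ψ₀(a+1−k)/k plus the sum over k from 1 to m of ψ₀(k+a−m)/k equals (ψ₀(a−m)+ψ₀(a+1))·(ψ₀(m+1)−ψ₀(1)) + (1/2)·((ψ₀(a−m)−ψ₀(a+1))² + ψ₁(a+1) − ψ₁(a−m)). -/

import Mathlib

open Finset

/-- The digamma function ψ₀ = (log ∘ Γ)'. -/
noncomputable def digamma (x : ℝ) : ℝ := deriv (fun y : ℝ => Real.log (Real.Gamma y)) x

/-- The trigamma function ψ₁ = ψ₀'. -/
noncomputable def trigamma (x : ℝ) : ℝ := deriv digamma x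

open Real

noncomputable def cdigamma (z : ℂ) : ℂ := deriv Complex.Gamma z / Complex.Gamma z

lemma rGamma_ne_pole {x : ℝ} (hx : 0 < x) : ∀ m : ℕ, x ≠ -m := by
  intro m h
  have : (0:ℝ) ≤ (m:ℝ) := Nat.cast_nonneg m
  rw [h] at hx; linarith

-- deriv of Real.Gamma equals re of deriv of Complex.Gamma
lemma deriv_rGamma_eq {x : ℝ} (hx : 0 < x) :
    HasDerivAt Real.Gamma ((deriv Complex.Gamma x).re) x := by
  have hc : HasDerivAt Complex.Gamma (deriv Complex.Gamma x) (x : ℂ) :=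
    (Complex.differentiableAt_Gamma _ (by
      intro m h
      have := congrArg Complex.re h
      simp only [Complex.ofReal_re, Complex.neg_re, Complex.natCast_re] at this
      exact rGamma_ne_pole hx m this)).hasDerivAt
  have := hc.real_of_complex
  refine this.congr_of_eventuallyEq (Filter.Eventually.of_forall fun y => ?_)
  simp [Complex.Gamma_ofReal]

lemma hasDerivAt_logGamma {x : ℝ} (hx : 0 < x) :
    HasDerivAt (fun y : ℝ => Real.log (Real.Gamma y)) ((cdigamma x).re) x := by
  have hne : Real.Gamma x ≠ 0 := (Real.Gamma_pos_of_pos hx).ne'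
  have h1 := deriv_rGamma_eq hx
  have h2 := (Real.hasDerivAt_log hne).comp x h1
  refine h2.congr_deriv ?_
  have hG : Complex.Gamma (x : ℂ) = (Real.Gamma x : ℂ) := Complex.Gamma_ofReal x
  rw [cdigamma, hG, Complex.div_ofReal_re]
  field_simp

lemma digamma_eq {x : ℝ} (hx : 0 < x) : digamma x = (cdigamma x).re :=
  (hasDerivAt_logGamma hx).deriv

lemma digamma_eventually {x : ℝ} (hx : 0 < x) :
    digamma =ᶠ[nhds x] fun y : ℝ => (cdigamma y).re := by
  filter_upwards [eventually_gt_nhds hx] with y hy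
  exact digamma_eq hy

lemma digamma_diff {x : ℝ} (hx : 0 < x) : DifferentiableAt ℝ digamma x := by
  have h : DifferentiableAt ℝ (fun y : ℝ => (cdigamma y).re) x := by
    have hc : DifferentiableAt ℂ cdigamma (x : ℂ) := by
      have hU : IsOpen {w : ℂ | 0 < w.re} := isOpen_lt continuous_const Complex.continuous_re
      have hd : DifferentiableOn ℂ Complex.Gamma {w : ℂ | 0 < w.re} := fun w hw =>
        (Complex.differentiableAt_Gamma w (by
          intro m h
          rw [h] at hw
          simp only [Set.mem_setOf_eq, Complex.neg_re, Complex.natCast_re] at hw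
          have : (0:ℝ) ≤ (m:ℝ) := Nat.cast_nonneg m
          linarith)).differentiableWithinAt
      have hz : (0:ℝ) < (x:ℂ).re := by simpa using hx
      have hpole : ∀ m : ℕ, (x:ℂ) ≠ -m := by
        intro m h
        have := congrArg Complex.re h
        simp only [Complex.ofReal_re, Complex.neg_re, Complex.natCast_re] at this
        exact rGamma_ne_pole hx m this
      exact (((hd.analyticOnNhd hU).deriv (x:ℂ) hz).differentiableAt).div
        (Complex.differentiableAt_Gamma _ hpole) (Complex.Gamma_ne_zero hpole)
    exact hc.hasDerivAt.real_of_complex.differentiableAt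
  exact (Filter.EventuallyEq.differentiableAt_iff (digamma_eventually hx)).mpr h
lemma digamma_add_one {x : ℝ} (hx : 0 < x) : digamma (x + 1) = digamma x + 1 / x := by
  have hdg : DifferentiableAt ℝ (fun y : ℝ => Real.log (Real.Gamma y)) x :=
    (hasDerivAt_logGamma hx).differentiableAt
  have key : deriv (fun y : ℝ => Real.log (Real.Gamma (y + 1))) x
      = deriv (fun y : ℝ => Real.log y + Real.log (Real.Gamma y)) x := by
    apply Filter.EventuallyEq.deriv_eq
    filter_upwards [eventually_gt_nhds hx] with y hy
    rw [Real.Gamma_add_one hy.ne', Real.log_mul hy.ne' (Real.Gamma_pos_of_pos hy).ne']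
  have h1 : deriv (fun y : ℝ => Real.log (Real.Gamma (y + 1))) x = digamma (x + 1) := by
    rw [digamma]
    exact deriv_comp_add_const (fun y : ℝ => Real.log (Real.Gamma y)) 1 x
  have h2 : deriv (fun y : ℝ => Real.log y + Real.log (Real.Gamma y)) x
      = 1 / x + digamma x := by
    rw [deriv_fun_add (Real.differentiableAt_log hx.ne') hdg, Real.deriv_log, digamma, one_div]
  rw [← h1, key, h2, add_comm]

lemma trigamma_add_one {x : ℝ} (hx : 0 < x) : trigamma (x + 1) = trigamma x - 1 / x ^ 2 := by
  have key : deriv (fun y : ℝ => digamma (y + 1)) x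
      = deriv (fun y : ℝ => digamma y + y⁻¹) x := by
    apply Filter.EventuallyEq.deriv_eq
    filter_upwards [eventually_gt_nhds hx] with y hy
    rw [digamma_add_one hy, one_div]
  have h1 : deriv (fun y : ℝ => digamma (y + 1)) x = trigamma (x + 1) := by
    rw [trigamma]
    exact deriv_comp_add_const digamma 1 x
  have h2 : deriv (fun y : ℝ => digamma y + y⁻¹) x = trigamma x - 1 / x ^ 2 := by
    rw [deriv_fun_add (digamma_diff hx) (differentiableAt_inv hx.ne'), deriv_inv, trigamma]
    ring
  rw [← h1, key, h2]
lemma digamma_telescope {c : ℝ} (hc : 0 < c) (m : ℕ) :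
    digamma (c + m) = digamma c + ∑ k ∈ Finset.Icc 1 m, 1 / (c + k - 1) := by
  induction m with
  | zero => simp
  | succ n ih =>
    rw [Finset.sum_Icc_succ_top (Nat.le_add_left 1 n)]
    have hcn : 0 < c + n := by positivity
    have : digamma (c + (n+1):ℝ) = digamma (c + n) + 1 / (c + n) := by
      have := digamma_add_one hcn
      rw [show (c + n) + 1 = c + ((n:ℝ)+1) by ring] at this
      convert this using 3 <;> push_cast <;> ring
    push_cast
    rw [this, ih]
    ring
theorem sum_digamma_reflect (m : ℕ) (hm : 0 < m) (a : ℝ) (ha : (m : ℝ) < a) :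
    (∑ k ∈ Finset.Icc 1 m, digamma (a + 1 - k) / k)
      + ∑ k ∈ Finset.Icc 1 m, digamma ((k : ℝ) + a - m) / k =
      (digamma (a - m) + digamma (a + 1)) * (digamma ((m : ℝ) + 1) - digamma 1)
        + (1 / 2) * ((digamma (a - m) - digamma (a + 1)) ^ 2
            + trigamma (a + 1) - trigamma (a - m)) := by
  induction m, hm using Nat.le_induction generalizing a with
  | base =>
    have ha1 : (1:ℝ) < a := by exact_mod_cast ha
    have ha0 : 0 < a := by linarith
    have hb : 0 < a - 1 := by linarith
    have e1 : digamma a = digamma (a-1) + 1/(a-1) := by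
      have := digamma_add_one hb; rw [show a - 1 + 1 = a by ring] at this; exact this
    have e2 : digamma (a+1) = digamma a + 1/a := digamma_add_one ha0
    have e3 : digamma ((1:ℝ)+1) = digamma 1 + 1 := by
      have := digamma_add_one one_pos; rw [this]; norm_num
    have e4 : trigamma a = trigamma (a-1) - 1/(a-1)^2 := by
      have := trigamma_add_one hb; rw [show a - 1 + 1 = a by ring] at this; exact this
    have e5 : trigamma (a+1) = trigamma a - 1/a^2 := trigamma_add_one ha0
    simp only [Finset.Icc_self, Finset.sum_singleton, Nat.cast_one]
    rw [show a + 1 - 1 = a by ring, show (1:ℝ) + a - 1 = a by ring]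
    rw [e5, e4, e2, e1, e3]
    field_simp
    ring
  | succ m hm IH =>
    have hm1a : (↑m + 1 : ℝ) < a := by push_cast at ha; linarith
    have hm0 : (0:ℝ) ≤ ↑m := Nat.cast_nonneg m
    have ha0 : (0:ℝ) < a := by linarith
    have hc : (0:ℝ) < a - ↑m - 1 := by linarith
    have ham : (0:ℝ) < a - ↑m := by linarith
    have hmp : (0:ℝ) < ↑m + 1 := by linarith
    -- split sums
    rw [Finset.sum_Icc_succ_top (Nat.le_add_left 1 m), Finset.sum_Icc_succ_top (Nat.le_add_left 1 m)]
    push_cast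
    -- rewrite second sum termwise
    have hstep : ∀ k ∈ Finset.Icc 1 m,
        digamma (↑k + a - (↑m + 1)) / ↑k
          = digamma (↑k + a - ↑m) / ↑k - (1/(a - ↑m - 1)) * (1/(↑k:ℝ))
            + (1/(a - ↑m - 1)) * (1/(a - ↑m + ↑k - 1)) := by
      intro k hk
      have hk1 : 1 ≤ k := (Finset.mem_Icc.mp hk).1
      have hk0 : (0:ℝ) < ↑k := by exact_mod_cast hk1
      have hx : (0:ℝ) < ↑k + a - ↑m - 1 := by linarith
      have hrec := digamma_add_one hx
      rw [show (↑k + a - ↑m - 1) + 1 = ↑k + a - ↑m by ring] at hrec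
      rw [show (↑k:ℝ) + a - (↑m + 1) = ↑k + a - ↑m - 1 by ring,
        show a - ↑m + ↑k - 1 = ↑k + a - ↑m - 1 by ring]
      rw [eq_sub_of_add_eq hrec.symm]
      field_simp
      ring
    rw [Finset.sum_congr rfl hstep]
    simp only [Finset.sum_add_distrib, Finset.sum_sub_distrib, ← Finset.mul_sum]
    -- harmonic sum
    have eH : ∑ k ∈ Finset.Icc 1 m, 1/(↑k:ℝ) = digamma (↑m + 1) - digamma 1 := by
      have h := digamma_telescope one_pos m
      rw [show (1:ℝ) + ↑m = ↑m + 1 by ring] at h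
      rw [h]
      have : ∀ k ∈ Finset.Icc 1 m, 1/((1:ℝ) + ↑k - 1) = 1/(↑k:ℝ) := by
        intro k _; norm_num
      rw [Finset.sum_congr rfl this]
      ring
    -- telescope to a
    have eK : ∑ k ∈ Finset.Icc 1 m, 1/(a - ↑m + ↑k - 1) = digamma a - digamma (a - ↑m) := by
      have h := digamma_telescope ham m
      rw [show a - ↑m + ↑m = a by ring] at h
      rw [h]; ring
    rw [eH, eK]
    -- digamma/trigamma recurrences
    have g1 : digamma (a - (↑m + 1)) = digamma (a - ↑m) - 1/(a - ↑m - 1) := by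
      have h := digamma_add_one hc
      rw [show (a - ↑m - 1) + 1 = a - ↑m by ring] at h
      rw [show a - (↑m + 1) = a - ↑m - 1 by ring, eq_sub_of_add_eq h.symm]
    have g2 : digamma (↑m + 1 + 1) = digamma (↑m + 1) + 1/(↑m + 1) := digamma_add_one hmp
    have g3 : trigamma (a - (↑m + 1)) = trigamma (a - ↑m) + 1/(a - ↑m - 1)^2 := by
      have h := trigamma_add_one hc
      rw [show (a - ↑m - 1) + 1 = a - ↑m by ring] at h
      rw [show a - (↑m + 1) = a - ↑m - 1 by ring]
      rw [h]; ring
    have g4 : digamma a = digamma (a + 1) - 1/a := by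
      rw [digamma_add_one ha0]; ring
    have g5 : digamma (a + 1 - (↑m + 1)) = digamma (a - ↑m) := by
      rw [show a + 1 - (↑m + 1) = a - ↑m by ring]
    have g6 : digamma (↑m + 1 + a - (↑m + 1)) = digamma a := by
      rw [show ↑m + 1 + a - (↑m + 1) = a by ring]
    -- use IH
    have hIH := IH a (by linarith)
    have hS1 : ∑ k ∈ Finset.Icc 1 m, digamma (a + 1 - ↑k) / ↑k
        = ((digamma (a - ↑m) + digamma (a + 1)) * (digamma ((↑m:ℝ) + 1) - digamma 1)
            + (1 / 2) * ((digamma (a - ↑m) - digamma (a + 1)) ^ 2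
                + trigamma (a + 1) - trigamma (a - ↑m)))
          - ∑ k ∈ Finset.Icc 1 m, digamma ((↑k:ℝ) + a - ↑m) / ↑k := by
      linarith [hIH]
    rw [g1, g2, g3, g5, g6, g4, hS1]
    field_simp
    ring
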